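/- Let E ⊆ ℝ² be a bounded domain with Fraenkel asymmetry A(E). Then for every measurable U ⊆ E with |U| ≥ |E|(1 − A(E)/4), one has A(U) ≥ A(E)/4. -/

import Mathlib

/-!
Let `A = A(E)`. For a disk `B` of area `|U|`, the concentric disk `B'` of area `|E|` contains it,
so `E ∆ B' ⊆ (E \ U) ∪ (U ∆ B) ∪ (B' \ B)`, two pieces of area `|E| - |U| ≤ A|E|/4` each.
As `A|E| ≤ |E ∆ B'|`, this leaves `|U ∆ B| ≥ A|E|/2 ≥ A|U|/4`.
-/

open MeasureTheory

/-- The Fraenkel asymmetry of a bounded set `E ⊆ ℝ²` of positive measure: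
`A(E) = inf{ |E △ (x₀ + rB)|/|E| : x₀ ∈ ℝ², πr² = |E| }`. -/
noncomputable def fraenkel (E : Set (EuclideanSpace ℝ (Fin 2))) : ℝ :=
  sInf { r : ℝ | ∃ (x₀ : EuclideanSpace ℝ (Fin 2)) (rad : ℝ), 0 ≤ rad ∧
    Real.pi * rad ^ 2 = (volume E).toReal ∧
    r = (volume (symmDiff E (Metric.ball x₀ rad))).toReal / (volume E).toReal }

open Metric Set
open scoped symmDiff

lemma volume_real_ball_fin_two (x : EuclideanSpace ℝ (Fin 2)) {r : ℝ} (hr : 0 ≤ r) :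
    volume.real (ball x r) = Real.pi * r ^ 2 := by
  simp [measureReal_def, ENNReal.toReal_ofReal hr, ENNReal.toReal_ofReal Real.pi_nonneg, mul_comm]

lemma exists_nonneg_pi_mul_sq_eq {a : ℝ} (ha : 0 ≤ a) : ∃ r : ℝ, 0 ≤ r ∧ Real.pi * r ^ 2 = a :=
  ⟨√(a / Real.pi), Real.sqrt_nonneg _, by
    rw [Real.sq_sqrt (by positivity), mul_div_cancel₀ _ Real.pi_ne_zero]⟩

section Fraenkel

variable {E : Set (EuclideanSpace ℝ (Fin 2))}

lemma bddBelow_fraenkel_set : BddBelow { q : ℝ | ∃ (x₀ : EuclideanSpace ℝ (Fin 2)) (rad : ℝ),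
    0 ≤ rad ∧ Real.pi * rad ^ 2 = (volume E).toReal ∧
    q = (volume (E ∆ ball x₀ rad)).toReal / (volume E).toReal } := by
  refine ⟨0, ?_⟩
  rintro q ⟨x₀, rad, -, -, rfl⟩
  positivity

lemma fraenkel_nonneg : 0 ≤ fraenkel E :=
  Real.sInf_nonneg <| by
    rintro q ⟨x₀, rad, -, -, rfl⟩
    positivity

lemma fraenkel_le (x₀ : EuclideanSpace ℝ (Fin 2)) {r : ℝ} (hr : 0 ≤ r)
    (harea : Real.pi * r ^ 2 = volume.real E) :
    fraenkel E ≤ volume.real (E ∆ ball x₀ r) / volume.real E :=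
  csInf_le bddBelow_fraenkel_set ⟨x₀, r, hr, harea, rfl⟩

lemma le_fraenkel {c : ℝ} (h : ∀ (x₀ : EuclideanSpace ℝ (Fin 2)) (r : ℝ), 0 ≤ r →
      Real.pi * r ^ 2 = volume.real E → c ≤ volume.real (E ∆ ball x₀ r) / volume.real E) :
    c ≤ fraenkel E := by
  obtain ⟨r, hr, harea⟩ := exists_nonneg_pi_mul_sq_eq (measureReal_nonneg (s := E))
  refine le_csInf ⟨_, 0, r, hr, harea, rfl⟩ ?_
  rintro q ⟨x₀, rad, hrad, hrad_area, rfl⟩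
  exact h x₀ rad hrad hrad_area

lemma fraenkel_mul_volume_le (x₀ : EuclideanSpace ℝ (Fin 2)) {r : ℝ} (hr : 0 ≤ r)
    (harea : Real.pi * r ^ 2 = volume.real E) :
    fraenkel E * volume.real E ≤ volume.real (E ∆ ball x₀ r) :=
  mul_le_of_le_div₀ measureReal_nonneg measureReal_nonneg (fraenkel_le x₀ hr harea)

lemma fraenkel_le_two (hE : volume E ≠ ⊤) : fraenkel E ≤ 2 := by
  obtain ⟨r, hr, harea⟩ := exists_nonneg_pi_mul_sq_eq (measureReal_nonneg (s := E))
  refine (fraenkel_le 0 hr harea).trans (div_le_of_le_mul₀ measureReal_nonneg zero_le_two ?_)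
  calc volume.real (E ∆ ball 0 r) ≤ volume.real (E ∪ ball 0 r) :=
        measureReal_mono symmDiff_subset_union
    _ ≤ volume.real E + volume.real (ball (0 : EuclideanSpace ℝ (Fin 2)) r) :=
        measureReal_union_le _ _
    _ = 2 * volume.real E := by rw [volume_real_ball_fin_two 0 hr, harea]; ring

lemma fraenkel_mul_volume_le_of_subset {U : Set (EuclideanSpace ℝ (Fin 2))}
    (hU : MeasurableSet U) (hUE : U ⊆ E) (hE : volume E ≠ ⊤)
    (x₀ : EuclideanSpace ℝ (Fin 2)) {r : ℝ} (hr : 0 ≤ r)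
    (harea : Real.pi * r ^ 2 = volume.real U) :
    fraenkel E * volume.real E
      ≤ 2 * (volume.real E - volume.real U) + volume.real (U ∆ ball x₀ r) := by
  obtain ⟨r', hr', harea'⟩ := exists_nonneg_pi_mul_sq_eq (measureReal_nonneg (s := E))
  have hrr' : r ≤ r' := by
    rw [← pow_le_pow_iff_left₀ hr hr' two_ne_zero, ← mul_le_mul_iff_right₀ Real.pi_pos,
      harea, harea']
    exact measureReal_mono hUE hE
  have hBB' : ball x₀ r ⊆ ball x₀ r' := ball_subset_ball hrr'
  have hU_fin : volume U ≠ ⊤ := measure_ne_top_of_subset hUE hE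
  have hEU : volume.real (E ∆ U) = volume.real E - volume.real U := by
    rw [symmDiff_of_ge hUE, measureReal_sdiff hUE hU hE]
  have hBB'_real : volume.real (ball x₀ r ∆ ball x₀ r') = volume.real E - volume.real U := by
    rw [symmDiff_of_le hBB', measureReal_sdiff hBB' measurableSet_ball,
      volume_real_ball_fin_two x₀ hr, volume_real_ball_fin_two x₀ hr', harea, harea']
  calc fraenkel E * volume.real E ≤ volume.real (E ∆ ball x₀ r') :=
        fraenkel_mul_volume_le x₀ hr' harea'
    _ ≤ volume.real (E ∆ U) + volume.real (U ∆ ball x₀ r') := measureReal_symmDiff_le _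
    _ ≤ volume.real (E ∆ U) + (volume.real (U ∆ ball x₀ r)
          + volume.real (ball x₀ r ∆ ball x₀ r')) := by
        gcongr
        exact measureReal_symmDiff_le _
    _ = 2 * (volume.real E - volume.real U) + volume.real (U ∆ ball x₀ r) := by
        rw [hEU, hBB'_real]; ring

end Fraenkel

theorem stmt9_general (E U : Set (EuclideanSpace ℝ (Fin 2)))
    (hEbdd : Bornology.IsBounded E) (hEpos : 0 < volume E)
    (hU : MeasurableSet U) (hUE : U ⊆ E)
    (hvol : (volume E).toReal * (1 - fraenkel E / 4) ≤ (volume U).toReal) :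
    fraenkel E / 4 ≤ fraenkel U := by
  have hE : volume E ≠ ⊤ := hEbdd.measure_lt_top.ne
  have hE_pos : 0 < volume.real E := ENNReal.toReal_pos hEpos.ne' hE
  have hUE_real : volume.real U ≤ volume.real E := measureReal_mono hUE hE
  have hA_nonneg : 0 ≤ fraenkel E := fraenkel_nonneg
  have hA_le : fraenkel E ≤ 2 := fraenkel_le_two hE
  have hvol' : volume.real E * (1 - fraenkel E / 4) ≤ volume.real U := hvol
  have hU_pos : 0 < volume.real U := by nlinarith
  refine le_fraenkel fun x₀ r hr harea => (le_div_iff₀ hU_pos).2 ?_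
  have hU_disk := fraenkel_mul_volume_le_of_subset hU hUE hE x₀ hr harea
  linarith [mul_le_mul_of_nonneg_left hUE_real hA_nonneg, mul_nonneg hA_nonneg hU_pos.le]

/-- If `U ⊆ E` with `|U| ≥ |E|(1 − A(E)/4)`, then `A(U) ≥ A(E)/4`. -/
theorem stmt9 (E U : Set (EuclideanSpace ℝ (Fin 2)))
    (hEmeas : MeasurableSet E) (hEbdd : Bornology.IsBounded E) (hEpos : 0 < volume E)
    (hU : MeasurableSet U) (hUE : U ⊆ E)
    (hvol : (volume E).toReal * (1 - fraenkel E / 4) ≤ (volume U).toReal) :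
    fraenkel E / 4 ≤ fraenkel U :=
  stmt9_general E U hEbdd hEpos hU hUE hvol
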